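/- Leftover hash lemma with extra leakage: Let {h_s : {0,1}^n → {0,1}^ℓ} be a 2-universal hash family with uniform independent seed S, and let X, Z, V be jointly distributed with V ∈ {0,1}^t. Then SD((S, Z, V, h_S(X)); (S, Z, V, U_ℓ)) ≤ (1/2)·√(2^{ℓ + t − H̃_∞(X|Z)}). -/

import Mathlib

open scoped Classical

/-- Statistical distance between two distributions on a finite set. -/
noncomputable def SD {W : Type*} [Fintype W] (P Q : W → ℝ) : ℝ :=
  (1 / 2) * ∑ w, |P w - Q w|

/-- Average guessing probability: `∑_z max_x Pr[X = x ∧ Z = z]`. -/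
noncomputable def avgGuess {Ω 𝒳 𝒵 : Type*} [Fintype Ω] [Fintype 𝒳] [Fintype 𝒵]
    (p : Ω → ℝ) (X : Ω → 𝒳) (Z : Ω → 𝒵) : ℝ :=
  ∑ z : 𝒵, ⨆ x : 𝒳, ∑ ω ∈ Finset.univ.filter (fun ω => X ω = x ∧ Z ω = z), p ω

/-- Average conditional min-entropy `H̃_∞(X|Z)`. -/
noncomputable def avgMinEnt {Ω 𝒳 𝒵 : Type*} [Fintype Ω] [Fintype 𝒳] [Fintype 𝒵]
    (p : Ω → ℝ) (X : Ω → 𝒳) (Z : Ω → 𝒵) : ℝ :=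
  - Real.logb 2 (avgGuess p X Z)

/-- Per-fiber L1 bound (core of the leftover hash lemma). -/
lemma fiber_L1
    {Ω S : Type*} [Fintype Ω] [Fintype S] [Nonempty S] {n ℓ : ℕ}
    (p : Ω → ℝ) (hp0 : ∀ ω, 0 ≤ p ω)
    (X : Ω → (Fin n → Bool)) (h : S → (Fin n → Bool) → (Fin ℓ → Bool))
    (huhf : ∀ x x' : Fin n → Bool, x ≠ x' →
      ((Finset.univ.filter (fun s => h s x = h s x')).card : ℝ) / (Fintype.card S : ℝ)
        ≤ 1 / 2 ^ ℓ)
    (B : Finset Ω) (g : ℝ)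
    (hg : ∀ ω ∈ B, ∑ ω' ∈ B.filter (fun ω' => X ω' = X ω), p ω' ≤ g) :
    ∑ s : S, ∑ y : Fin ℓ → Bool,
      |(∑ ω ∈ B.filter (fun ω => h s (X ω) = y), p ω) / (Fintype.card S : ℝ)
        - (∑ ω ∈ B, p ω) / ((Fintype.card S : ℝ) * 2 ^ ℓ)|
      ≤ Real.sqrt (2 ^ ℓ * g * (∑ ω ∈ B, p ω)) := by
  set cS : ℝ := (Fintype.card S : ℝ) with hcSdef
  have hcS : (0:ℝ) < cS := by
    simp only [hcSdef]; exact_mod_cast Fintype.card_pos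
  set m : ℝ := ∑ ω ∈ B, p ω with hmdef
  have hm0 : 0 ≤ m := Finset.sum_nonneg fun ω _ => hp0 ω
  have hL : (0:ℝ) < 2 ^ ℓ := by positivity
  have hcardY : (Fintype.card (Fin ℓ → Bool) : ℝ) = 2 ^ ℓ := by
    simp [Fintype.card_fun]
  set T : S → (Fin ℓ → Bool) → ℝ :=
    fun s y => ∑ ω ∈ B.filter (fun ω => h s (X ω) = y), p ω with hTdef
  set Q : ℝ := m / (cS * 2 ^ ℓ) with hQdef
  -- fiber sums
  have hfib : ∀ s : S, ∑ y : Fin ℓ → Bool, T s y = m :=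
    fun s => Finset.sum_fiberwise B (fun ω => h s (X ω)) p
  -- square expansion
  have hsq : ∀ s : S, ∑ y : Fin ℓ → Bool, (T s y) ^ 2
      = ∑ ω ∈ B, p ω * ∑ ω' ∈ B.filter (fun ω' => h s (X ω') = h s (X ω)), p ω' := by
    intro s
    have key : ∀ y : Fin ℓ → Bool,
        (T s y) ^ 2
        = ∑ ω ∈ B.filter (fun ω => h s (X ω) = y),
            (p ω * ∑ ω' ∈ B.filter (fun ω' => h s (X ω') = h s (X ω)), p ω') := by
      intro y
      rw [hTdef, sq, Finset.sum_mul]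
      refine Finset.sum_congr rfl fun ω hω => ?_
      have hy : h s (X ω) = y := (Finset.mem_filter.mp hω).2
      rw [hy]
    simp_rw [key]
    exact Finset.sum_fiberwise B (fun ω => h s (X ω)) _
  -- collision count bound
  have hcnt : ∀ ω ω' : Ω,
      ((Finset.univ.filter (fun s : S => h s (X ω') = h s (X ω))).card : ℝ)
      ≤ (if X ω' = X ω then cS else 0) + cS / 2 ^ ℓ := by
    intro ω ω'
    by_cases hxe : X ω' = X ω
    · rw [if_pos hxe]
      have h1 : ((Finset.univ.filter (fun s : S => h s (X ω') = h s (X ω))).card : ℝ) ≤ cS := by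
        rw [hcSdef]
        exact_mod_cast le_trans (Finset.card_filter_le _ _) (le_of_eq Finset.card_univ)
      have h2 : (0:ℝ) ≤ cS / 2 ^ ℓ := by positivity
      linarith
    · have h2 := huhf (X ω') (X ω) hxe
      rw [div_le_div_iff₀ hcS hL] at h2
      rw [if_neg hxe, zero_add]
      rw [le_div_iff₀ hL]
      linarith
  -- sum over seeds of collision sums
  have hcol : ∑ s : S, ∑ ω ∈ B, p ω * ∑ ω' ∈ B.filter (fun ω' => h s (X ω') = h s (X ω)), p ω'
      ≤ cS * g * m + cS / 2 ^ ℓ * m ^ 2 := by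
    rw [Finset.sum_comm]
    have hswap : ∀ ω ∈ B,
        ∑ s : S, p ω * ∑ ω' ∈ B.filter (fun ω' => h s (X ω') = h s (X ω)), p ω'
        = p ω * ∑ ω' ∈ B,
            ((Finset.univ.filter (fun s : S => h s (X ω') = h s (X ω))).card : ℝ) * p ω' := by
      intro ω _
      rw [← Finset.mul_sum]
      congr 1
      simp_rw [Finset.sum_filter]
      rw [Finset.sum_comm]
      refine Finset.sum_congr rfl fun ω' _ => ?_
      rw [← Finset.sum_filter, Finset.sum_const, nsmul_eq_mul]
    calc ∑ ω ∈ B, ∑ s : S, p ω * ∑ ω' ∈ B.filter (fun ω' => h s (X ω') = h s (X ω)), p ω'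
        = ∑ ω ∈ B, p ω * ∑ ω' ∈ B,
            ((Finset.univ.filter (fun s : S => h s (X ω') = h s (X ω))).card : ℝ) * p ω' :=
          Finset.sum_congr rfl hswap
      _ ≤ ∑ ω ∈ B, p ω * (cS * g + cS / 2 ^ ℓ * m) := by
          refine Finset.sum_le_sum fun ω hω => ?_
          refine mul_le_mul_of_nonneg_left ?_ (hp0 ω)
          calc ∑ ω' ∈ B,
              ((Finset.univ.filter (fun s : S => h s (X ω') = h s (X ω))).card : ℝ) * p ω'
              ≤ ∑ ω' ∈ B, ((if X ω' = X ω then cS else 0) + cS / 2 ^ ℓ) * p ω' :=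
                Finset.sum_le_sum fun ω' _ =>
                  mul_le_mul_of_nonneg_right (hcnt ω ω') (hp0 ω')
            _ = cS * (∑ ω' ∈ B.filter (fun ω' => X ω' = X ω), p ω') + cS / 2 ^ ℓ * m := by
                simp_rw [add_mul, Finset.sum_add_distrib, ite_mul, zero_mul,
                  ← Finset.sum_filter, ← Finset.mul_sum]
                rfl
            _ ≤ cS * g + cS / 2 ^ ℓ * m := by
                have h3 := hg ω hω
                have h4 : (0:ℝ) ≤ cS := le_of_lt hcS
                nlinarith
      _ = m * (cS * g + cS / 2 ^ ℓ * m) := by rw [← Finset.sum_mul]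
      _ = cS * g * m + cS / 2 ^ ℓ * m ^ 2 := by ring
  -- second moment bound
  have hsum2 : ∑ s : S, ∑ y : Fin ℓ → Bool, (T s y) ^ 2 ≤ cS * g * m + cS / 2 ^ ℓ * m ^ 2 := by
    calc ∑ s : S, ∑ y : Fin ℓ → Bool, (T s y) ^ 2
        = ∑ s : S, ∑ ω ∈ B, p ω * ∑ ω' ∈ B.filter (fun ω' => h s (X ω') = h s (X ω)), p ω' :=
          Finset.sum_congr rfl fun s _ => hsq s
      _ ≤ _ := hcol
  -- variance bound
  have hvar : ∑ s : S, ∑ y : Fin ℓ → Bool, (T s y / cS - Q) ^ 2 ≤ g * m / cS := by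
    have hexp : ∀ s y, (T s y / cS - Q) ^ 2
        = (T s y) ^ 2 / cS ^ 2 - (2 * m / (cS ^ 2 * 2 ^ ℓ)) * T s y + m ^ 2 / (cS * 2 ^ ℓ) ^ 2 := by
      intro s y
      rw [hQdef]
      field_simp
      ring
    have e1 : ∀ s : S, ∑ y : Fin ℓ → Bool, (T s y / cS - Q) ^ 2
        = (∑ y : Fin ℓ → Bool, (T s y) ^ 2) / cS ^ 2
          - (2 * m / (cS ^ 2 * 2 ^ ℓ)) * m + 2 ^ ℓ * (m ^ 2 / (cS * 2 ^ ℓ) ^ 2) := by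
      intro s
      simp_rw [hexp]
      rw [Finset.sum_add_distrib, Finset.sum_sub_distrib, ← Finset.sum_div, ← Finset.mul_sum,
        hfib s, Finset.sum_const, Finset.card_univ, nsmul_eq_mul, hcardY]
    have e2 : ∑ s : S, ∑ y : Fin ℓ → Bool, (T s y / cS - Q) ^ 2
        = (∑ s : S, ∑ y : Fin ℓ → Bool, (T s y) ^ 2) / cS ^ 2
          - cS * ((2 * m / (cS ^ 2 * 2 ^ ℓ)) * m) + cS * (2 ^ ℓ * (m ^ 2 / (cS * 2 ^ ℓ) ^ 2)) := by
      simp_rw [e1]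
      rw [Finset.sum_add_distrib, Finset.sum_sub_distrib, ← Finset.sum_div,
        Finset.sum_const, Finset.sum_const, Finset.card_univ, nsmul_eq_mul, nsmul_eq_mul]
    have e3 : (cS * g * m + cS / 2 ^ ℓ * m ^ 2) / cS ^ 2
          - cS * ((2 * m / (cS ^ 2 * 2 ^ ℓ)) * m) + cS * (2 ^ ℓ * (m ^ 2 / (cS * 2 ^ ℓ) ^ 2))
        = g * m / cS := by
      field_simp
      ring
    have e4 : (∑ s : S, ∑ y : Fin ℓ → Bool, (T s y) ^ 2) / cS ^ 2
        ≤ (cS * g * m + cS / 2 ^ ℓ * m ^ 2) / cS ^ 2 := by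
      apply div_le_div_of_nonneg_right hsum2
      positivity
    rw [e2]
    linarith
  -- Cauchy-Schwarz
  set A : ℝ := ∑ s : S, ∑ y : Fin ℓ → Bool, |T s y / cS - Q| with hAdef
  have hA0 : 0 ≤ A :=
    Finset.sum_nonneg fun s _ => Finset.sum_nonneg fun y _ => abs_nonneg _
  have hA2 : A ^ 2 ≤ 2 ^ ℓ * g * m := by
    have hCS := Finset.sum_mul_sq_le_sq_mul_sq (Finset.univ : Finset (S × (Fin ℓ → Bool)))
      (fun sy => |T sy.1 sy.2 / cS - Q|) (fun _ => 1)
    have hAprod : A = ∑ sy : S × (Fin ℓ → Bool), |T sy.1 sy.2 / cS - Q| * 1 := by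
      rw [hAdef, Fintype.sum_prod_type]
      simp
    have hsq2 : ∑ sy : S × (Fin ℓ → Bool), |T sy.1 sy.2 / cS - Q| ^ 2
        = ∑ s : S, ∑ y : Fin ℓ → Bool, (T s y / cS - Q) ^ 2 := by
      rw [Fintype.sum_prod_type]
      simp [sq_abs]
    have hone : ∑ _sy : S × (Fin ℓ → Bool), (1:ℝ) ^ 2 = cS * 2 ^ ℓ := by
      simp [Finset.sum_const, Finset.card_univ, Fintype.card_prod, hcardY, hcSdef,
        Fintype.card_fun]
    rw [← hAprod] at hCS
    rw [hsq2, hone] at hCS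
    calc A ^ 2 ≤ (∑ s : S, ∑ y : Fin ℓ → Bool, (T s y / cS - Q) ^ 2) * (cS * 2 ^ ℓ) := hCS
      _ ≤ (g * m / cS) * (cS * 2 ^ ℓ) := by
          apply mul_le_mul_of_nonneg_right hvar
          positivity
      _ = 2 ^ ℓ * g * m := by field_simp
  calc A = Real.sqrt (A ^ 2) := (Real.sqrt_sq hA0).symm
    _ ≤ Real.sqrt (2 ^ ℓ * g * m) := Real.sqrt_le_sqrt hA2

/-- leftover hash lemma with extra leakage `V ∈ {0,1}^t`:
`SD((S, Z, V, h_S(X)); (S, Z, V, U_ℓ)) ≤ (1/2)·√(2^{ℓ + t − H̃_∞(X|Z)})`. -/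
theorem leftover_hash_with_leakage
    {Ω 𝒵 S : Type*} [Fintype Ω] [Fintype 𝒵] [Fintype S] [Nonempty S]
    (n ℓ t : ℕ)
    (p : Ω → ℝ) (hp0 : ∀ ω, 0 ≤ p ω) (hp1 : ∑ ω, p ω = 1)
    (X : Ω → (Fin n → Bool)) (Z : Ω → 𝒵) (V : Ω → (Fin t → Bool))
    (h : S → (Fin n → Bool) → (Fin ℓ → Bool))
    (huhf : ∀ x x' : Fin n → Bool, x ≠ x' →
      ((Finset.univ.filter (fun s => h s x = h s x')).card : ℝ) / (Fintype.card S : ℝ)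
        ≤ 1 / 2 ^ ℓ) :
    SD
      (fun w : S × 𝒵 × (Fin t → Bool) × (Fin ℓ → Bool) =>
        (∑ ω ∈ Finset.univ.filter
            (fun ω => Z ω = w.2.1 ∧ V ω = w.2.2.1 ∧ h w.1 (X ω) = w.2.2.2), p ω)
          / (Fintype.card S : ℝ))
      (fun w : S × 𝒵 × (Fin t → Bool) × (Fin ℓ → Bool) =>
        (∑ ω ∈ Finset.univ.filter (fun ω => Z ω = w.2.1 ∧ V ω = w.2.2.1), p ω)
          / ((Fintype.card S : ℝ) * 2 ^ ℓ))
    ≤ (1 / 2) * Real.sqrt ((2 : ℝ) ^ ((ℓ : ℝ) + t - avgMinEnt p X Z)) := by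
  classical
  set cS : ℝ := (Fintype.card S : ℝ) with hcSdef
  set G : ℝ := avgGuess p X Z with hGdef
  have hbdd : ∀ (f : (Fin n → Bool) → ℝ), BddAbove (Set.range f) :=
    fun f => (Set.finite_range f).bddAbove
  -- joint point masses
  set P3 : (Fin n → Bool) → 𝒵 → (Fin t → Bool) → ℝ := fun x z v =>
    ∑ ω ∈ Finset.univ.filter (fun ω => X ω = x ∧ Z ω = z ∧ V ω = v), p ω with hP3def
  set P2 : (Fin n → Bool) → 𝒵 → ℝ := fun x z =>
    ∑ ω ∈ Finset.univ.filter (fun ω => X ω = x ∧ Z ω = z), p ω with hP2def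
  set g : 𝒵 → (Fin t → Bool) → ℝ := fun z v => ⨆ x : Fin n → Bool, P3 x z v with hgdef
  set Bf : 𝒵 → (Fin t → Bool) → Finset Ω := fun z v =>
    Finset.univ.filter (fun ω => Z ω = z ∧ V ω = v) with hBfdef
  set mm : 𝒵 → (Fin t → Bool) → ℝ := fun z v => ∑ ω ∈ Bf z v, p ω with hmmdef
  have hP3nn : ∀ x z v, 0 ≤ P3 x z v := fun x z v =>
    Finset.sum_nonneg fun ω _ => hp0 ω
  have hgnn : ∀ z v, 0 ≤ g z v := fun z v =>
    le_trans (hP3nn default z v) (le_ciSup (f := fun x => P3 x z v) (hbdd _) default)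
  have hmmnn : ∀ z v, 0 ≤ mm z v := fun z v =>
    Finset.sum_nonneg fun ω _ => hp0 ω
  -- the per-fiber hypothesis
  have hgg : ∀ z v, ∀ ω ∈ Bf z v,
      ∑ ω' ∈ (Bf z v).filter (fun ω' => X ω' = X ω), p ω' ≤ g z v := by
    intro z v ω hω
    have hset : (Bf z v).filter (fun ω' => X ω' = X ω)
        = Finset.univ.filter (fun ω' => X ω' = X ω ∧ Z ω' = z ∧ V ω' = v) := by
      ext ω'
      simp only [hBfdef, Finset.mem_filter, Finset.mem_univ, true_and]
      tauto
    rw [hset]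
    exact le_ciSup (f := fun x => P3 x z v) (hbdd _) (X ω)
  -- positivity of the guessing probability
  have hG0 : 0 < G := by
    have hex : ∃ ω, 0 < p ω := by
      by_contra hc
      push_neg at hc
      have hzero : ∑ ω, p ω = 0 :=
        Finset.sum_eq_zero fun ω _ => le_antisymm (hc ω) (hp0 ω)
      rw [hzero] at hp1
      norm_num at hp1
    obtain ⟨ω0, hω0⟩ := hex
    rw [hGdef, avgGuess]
    apply Finset.sum_pos'
    · intro z _
      refine le_trans ?_ (le_ciSup (hbdd _) default)
      exact Finset.sum_nonneg fun ω _ => hp0 ω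
    · refine ⟨Z ω0, Finset.mem_univ _, ?_⟩
      refine lt_of_lt_of_le ?_ (le_ciSup (hbdd _) (X ω0))
      refine lt_of_lt_of_le hω0 ?_
      refine Finset.single_le_sum (fun ω _ => hp0 ω) ?_
      simp
  -- mass decomposition
  have hmass : ∑ z : 𝒵, ∑ v : Fin t → Bool, mm z v = 1 := by
    have h1 : ∀ z : 𝒵, ∑ v : Fin t → Bool, mm z v
        = ∑ ω ∈ Finset.univ.filter (fun ω => Z ω = z), p ω := by
      intro z
      have h2 : ∀ v, Bf z v
          = (Finset.univ.filter (fun ω => Z ω = z)).filter (fun ω => V ω = v) := by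
        intro v
        ext ω
        simp only [hBfdef, Finset.mem_filter, Finset.mem_univ, true_and]
      simp_rw [hmmdef, h2]
      exact Finset.sum_fiberwise _ V p
    simp_rw [h1]
    rw [Finset.sum_fiberwise Finset.univ Z p]
    exact hp1
  -- leakage bound on sup
  have hgsum : ∑ z : 𝒵, ∑ v : Fin t → Bool, g z v ≤ 2 ^ t * G := by
    have h1 : ∀ z v, g z v ≤ ⨆ x : Fin n → Bool, P2 x z := by
      intro z v
      refine ciSup_le fun x => ?_
      refine le_trans ?_ (le_ciSup (hbdd _) x)
      refine Finset.sum_le_sum_of_subset_of_nonneg ?_ fun ω _ _ => hp0 ω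
      intro ω hω
      simp only [Finset.mem_filter, Finset.mem_univ, true_and] at hω ⊢
      tauto
    have h2 : ∀ z, ∑ v : Fin t → Bool, g z v ≤ 2 ^ t * ⨆ x : Fin n → Bool, P2 x z := by
      intro z
      calc ∑ v : Fin t → Bool, g z v
          ≤ ∑ _v : Fin t → Bool, ⨆ x : Fin n → Bool, P2 x z :=
            Finset.sum_le_sum fun v _ => h1 z v
        _ = 2 ^ t * ⨆ x : Fin n → Bool, P2 x z := by
            rw [Finset.sum_const, Finset.card_univ, nsmul_eq_mul]
            norm_num [Fintype.card_fun]
    calc ∑ z : 𝒵, ∑ v : Fin t → Bool, g z v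
        ≤ ∑ z : 𝒵, 2 ^ t * ⨆ x : Fin n → Bool, P2 x z :=
          Finset.sum_le_sum fun z _ => h2 z
      _ = 2 ^ t * G := by
          have h3 : (∑ z : 𝒵, ⨆ x : Fin n → Bool, P2 x z) = G := by
            rw [hGdef, avgGuess]
            refine Finset.sum_congr rfl fun z _ => ?_
            refine iSup_congr fun x => ?_
            rw [hP2def]
            congr!
          rw [← Finset.mul_sum, h3]
  -- apply the per-fiber lemma and sum up
  set Rtot : ℝ := ∑ zv : 𝒵 × (Fin t → Bool),
    Real.sqrt (2 ^ ℓ * g zv.1 zv.2 * mm zv.1 zv.2) with hRtotdef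
  have hRnn : 0 ≤ Rtot :=
    Finset.sum_nonneg fun zv _ => Real.sqrt_nonneg _
  have hmain : ∑ w : S × 𝒵 × (Fin t → Bool) × (Fin ℓ → Bool),
      |(∑ ω ∈ Finset.univ.filter
            (fun ω => Z ω = w.2.1 ∧ V ω = w.2.2.1 ∧ h w.1 (X ω) = w.2.2.2), p ω) / cS
        - (∑ ω ∈ Finset.univ.filter (fun ω => Z ω = w.2.1 ∧ V ω = w.2.2.1), p ω)
            / (cS * 2 ^ ℓ)| ≤ Rtot := by
    have hfilt : ∀ (s : S) (z : 𝒵) (v : Fin t → Bool) (y : Fin ℓ → Bool),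
        Finset.univ.filter (fun ω => Z ω = z ∧ V ω = v ∧ h s (X ω) = y)
        = (Bf z v).filter (fun ω => h s (X ω) = y) := by
      intro s z v y
      ext ω
      simp only [hBfdef, Finset.mem_filter, Finset.mem_univ, true_and]
      tauto
    calc ∑ w : S × 𝒵 × (Fin t → Bool) × (Fin ℓ → Bool),
        |(∑ ω ∈ Finset.univ.filter
              (fun ω => Z ω = w.2.1 ∧ V ω = w.2.2.1 ∧ h w.1 (X ω) = w.2.2.2), p ω) / cS
          - (∑ ω ∈ Finset.univ.filter (fun ω => Z ω = w.2.1 ∧ V ω = w.2.2.1), p ω)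
              / (cS * 2 ^ ℓ)|
        = ∑ s : S, ∑ z : 𝒵, ∑ v : Fin t → Bool, ∑ y : Fin ℓ → Bool,
            |(∑ ω ∈ Finset.univ.filter
                  (fun ω => Z ω = z ∧ V ω = v ∧ h s (X ω) = y), p ω) / cS
              - (∑ ω ∈ Finset.univ.filter (fun ω => Z ω = z ∧ V ω = v), p ω)
                  / (cS * 2 ^ ℓ)| := by
          simp only [Fintype.sum_prod_type]
      _ = ∑ z : 𝒵, ∑ v : Fin t → Bool, ∑ s : S, ∑ y : Fin ℓ → Bool,
            |(∑ ω ∈ Finset.univ.filter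
                  (fun ω => Z ω = z ∧ V ω = v ∧ h s (X ω) = y), p ω) / cS
              - (∑ ω ∈ Finset.univ.filter (fun ω => Z ω = z ∧ V ω = v), p ω)
                  / (cS * 2 ^ ℓ)| := by
          rw [Finset.sum_comm]
          exact Finset.sum_congr rfl fun z _ => Finset.sum_comm
      _ = ∑ zv : 𝒵 × (Fin t → Bool), ∑ s : S, ∑ y : Fin ℓ → Bool,
            |(∑ ω ∈ (Bf zv.1 zv.2).filter (fun ω => h s (X ω) = y), p ω) / cS
              - (mm zv.1 zv.2) / (cS * 2 ^ ℓ)| := by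
          rw [Fintype.sum_prod_type]
          refine Finset.sum_congr rfl fun z _ => ?_
          refine Finset.sum_congr rfl fun v _ => ?_
          refine Finset.sum_congr rfl fun s _ => ?_
          refine Finset.sum_congr rfl fun y _ => ?_
          rw [hfilt s z v y]
      _ ≤ ∑ zv : 𝒵 × (Fin t → Bool), Real.sqrt (2 ^ ℓ * g zv.1 zv.2 * mm zv.1 zv.2) := by
          refine Finset.sum_le_sum fun zv _ => ?_
          exact fiber_L1 p hp0 X h huhf (Bf zv.1 zv.2) (g zv.1 zv.2) (hgg zv.1 zv.2)
      _ = Rtot := rfl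
  -- Cauchy–Schwarz over (z, v)
  have hR2 : Rtot ^ 2 ≤ 2 ^ ℓ * (2 ^ t * G) := by
    have hCS := Finset.sum_sq_le_sum_mul_sum_of_sq_eq_mul
      (Finset.univ : Finset (𝒵 × (Fin t → Bool)))
      (f := fun zv => 2 ^ ℓ * g zv.1 zv.2) (g := fun zv => mm zv.1 zv.2)
      (r := fun zv => Real.sqrt (2 ^ ℓ * g zv.1 zv.2 * mm zv.1 zv.2))
      (fun zv _ => mul_nonneg (by positivity) (hgnn zv.1 zv.2))
      (fun zv _ => hmmnn zv.1 zv.2)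
      (fun zv _ => by
        rw [Real.sq_sqrt (mul_nonneg (mul_nonneg (by positivity) (hgnn zv.1 zv.2))
          (hmmnn zv.1 zv.2))])
    have hsumg : ∑ zv : 𝒵 × (Fin t → Bool), 2 ^ ℓ * g zv.1 zv.2 ≤ 2 ^ ℓ * (2 ^ t * G) := by
      rw [← Finset.mul_sum]
      refine mul_le_mul_of_nonneg_left ?_ (by positivity)
      rw [Fintype.sum_prod_type]
      exact hgsum
    have hsumm : ∑ zv : 𝒵 × (Fin t → Bool), mm zv.1 zv.2 = 1 := by
      rw [Fintype.sum_prod_type]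
      exact hmass
    rw [hsumm, mul_one] at hCS
    exact le_trans hCS hsumg
  have hRle : Rtot ≤ Real.sqrt (2 ^ ℓ * (2 ^ t * G)) := by
    calc Rtot = Real.sqrt (Rtot ^ 2) := (Real.sqrt_sq hRnn).symm
      _ ≤ _ := Real.sqrt_le_sqrt hR2
  -- identify the right-hand side
  have hrhs : (2 : ℝ) ^ ((ℓ : ℝ) + t - avgMinEnt p X Z) = 2 ^ ℓ * (2 ^ t * G) := by
    have hexp : (ℓ : ℝ) + t - avgMinEnt p X Z = ((ℓ : ℝ) + (t : ℝ)) + Real.logb 2 G := by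
      rw [avgMinEnt, ← hGdef]
      ring
    rw [hexp, Real.rpow_add two_pos, Real.rpow_add two_pos,
      Real.rpow_logb two_pos (by norm_num) hG0,
      Real.rpow_natCast, Real.rpow_natCast]
    ring
  rw [SD, hrhs]
  have := le_trans hmain hRle
  linarith
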